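/- For integer n ≥ 1, α > 0, x > 0, y > 0, the noncentral gamma cdf satisfies G_{1+n}(x, y) = G_1(x, y) − e^{-y} Σ_{k=1}^n g_{1+k}(x) ₀F₁(1+k; x y), where g_β(x) = x^{β-1} e^{-x}/Γ(β) and ₀F₁(β; z) = Σ_{m≥0} z^m / ((β)_m m!). -/

import Mathlib

open Real

/-- The gamma density with shape `β`. -/
noncomputable def gdens (β x : ℝ) : ℝ := x ^ (β - 1) * Real.exp (-x) / Real.Gamma β

/-- The gamma cdf with shape `α`. -/
noncomputable def Gcdf (α x : ℝ) : ℝ := ∫ ξ in (0:ℝ)..x, gdens α ξ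

/-- The noncentral gamma cdf `G_α(x, y)`. -/
noncomputable def ncGcdf (α x y : ℝ) : ℝ :=
  Real.exp (-y) * ∑' m : ℕ, Gcdf (α + m) x * y ^ m / m.factorial

/-- The confluent hypergeometric limit function `₀F₁(β; z)`. -/
noncomputable def F01 (β z : ℝ) : ℝ :=
  ∑' m : ℕ, z ^ m / ((∏ i ∈ Finset.range m, (β + i)) * m.factorial)

/-!
For integer shapes `g_{j+1}(t) = tʲ e⁻ᵗ / j!`, so `g_{j+2}' = g_{j+1} - g_{j+2}` and hence
`G_{j+2}(x) = G_{j+1}(x) - g_{j+2}(x)`. Applied termwise to the Poisson mixture defining the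
noncentral cdf, this gives
`G_{1+k}(x, y) - G_{2+k}(x, y) = e^{-y} Σₘ g_{2+k+m}(x) yᵐ / m!`
`                             = e^{-y} g_{2+k}(x) ₀F₁(2+k; x y)`,
and the theorem follows by telescoping over `k`. Splitting the series termwise is justified by
the bound `|G_{1+j}(x)| ≤ |x| e^{2|x|}`, uniform in `j`.
-/

open Nat in
lemma gdens_one_add_natCast (j : ℕ) (t : ℝ) :
    gdens (1 + j) t = t ^ j * exp (-t) / j ! := by
  rw [gdens, add_sub_cancel_left, rpow_natCast, add_comm, Gamma_nat_eq_factorial]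

lemma continuous_gdens_one_add_natCast (j : ℕ) : Continuous (gdens (1 + j)) := by
  simp only [funext (gdens_one_add_natCast j)]
  fun_prop

lemma hasDerivAt_gdens_one_add_natCast_succ (j : ℕ) (t : ℝ) :
    HasDerivAt (gdens (1 + (j + 1 : ℕ))) (gdens (1 + j) t - gdens (1 + (j + 1 : ℕ)) t) t := by
  simp only [funext (gdens_one_add_natCast _)]
  have h := (((hasDerivAt_pow (j + 1) t).mul (hasDerivAt_neg t).exp).div_const
    ((j + 1).factorial : ℝ))
  refine h.congr_deriv ?_
  rw [Nat.factorial_succ]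
  push_cast
  field_simp
  ring

lemma Gcdf_one_add_natCast_succ (j : ℕ) (x : ℝ) :
    Gcdf (1 + (j + 1 : ℕ)) x = Gcdf (1 + j) x - gdens (1 + (j + 1 : ℕ)) x := by
  have hint := fun k : ℕ =>
    (continuous_gdens_one_add_natCast k).intervalIntegrable (μ := MeasureTheory.volume) 0 x
  have hFTC := intervalIntegral.integral_eq_sub_of_hasDerivAt
    (fun t _ => hasDerivAt_gdens_one_add_natCast_succ j t) ((hint j).sub (hint (j + 1)))
  rw [intervalIntegral.integral_sub (hint j) (hint (j + 1)), gdens_one_add_natCast (j + 1) 0,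
    zero_pow j.succ_ne_zero, zero_mul, zero_div, sub_zero] at hFTC
  rw [Gcdf, Gcdf]
  linarith

lemma abs_gdens_one_add_natCast_le (j : ℕ) (t : ℝ) : |gdens (1 + j) t| ≤ exp (2 * |t|) := by
  rw [gdens_one_add_natCast, abs_div, abs_mul, abs_pow, abs_exp, Nat.abs_cast, mul_div_right_comm,
    two_mul, exp_add]
  gcongr
  · exact pow_div_factorial_le_exp _ (abs_nonneg t) j
  · exact neg_le_abs t

lemma abs_Gcdf_one_add_natCast_le (j : ℕ) (x : ℝ) :
    |Gcdf (1 + j) x| ≤ exp (2 * |x|) * |x| := by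
  have h := intervalIntegral.norm_integral_le_of_norm_le_const (a := 0) (b := x)
    (f := gdens (1 + j)) (C := exp (2 * |x|)) fun t ht => by
      have ht' : |t| ≤ |x| := by
        simpa using Set.abs_sub_left_of_mem_uIcc (Set.uIoc_subset_uIcc ht)
      exact (abs_gdens_one_add_natCast_le j t).trans (by gcongr)
  simpa [Gcdf] using h

lemma gdens_one_add_natCast_add (j m : ℕ) (t : ℝ) :
    gdens (1 + (j + m : ℕ)) t =
      gdens (1 + j) t * t ^ m / ∏ i ∈ Finset.range m, (1 + j + i : ℝ) := by
  have hprod : ∏ i ∈ Finset.range m, (1 + j + i : ℝ) = ((j + 1).ascFactorial m : ℕ) := by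
    simp only [Nat.ascFactorial_eq_prod_range, Nat.cast_prod, Nat.cast_add, Nat.cast_one,
      add_comm (1 : ℝ)]
  have hfact : ((j + m).factorial : ℝ) = j.factorial * (j + 1).ascFactorial m := by
    exact_mod_cast (Nat.factorial_mul_ascFactorial j m).symm
  rw [gdens_one_add_natCast, gdens_one_add_natCast, hprod, hfact, pow_add]
  field_simp

lemma summable_Gcdf_mul_pow_div_factorial (k : ℕ) (x y : ℝ) :
    Summable fun m : ℕ => Gcdf (1 + k + m) x * y ^ m / m.factorial := by
  refine Summable.of_norm_bounded ((summable_pow_div_factorial |y|).mul_left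
    (exp (2 * |x|) * |x|)) fun m => ?_
  rw [show (1 : ℝ) + k + m = 1 + (k + m : ℕ) by push_cast; ring, norm_eq_abs, abs_div, abs_mul,
    abs_pow, Nat.abs_cast, mul_div_assoc]
  gcongr
  exact abs_Gcdf_one_add_natCast_le _ x

lemma ncGcdf_sub_ncGcdf_succ (k : ℕ) (x y : ℝ) :
    ncGcdf (1 + k) x y - ncGcdf (1 + (k + 1 : ℕ)) x y
      = exp (-y) * (gdens (1 + (k + 1 : ℕ)) x * F01 (1 + (k + 1 : ℕ)) (x * y)) := by
  rw [ncGcdf, ncGcdf, ← mul_sub, ← (summable_Gcdf_mul_pow_div_factorial k x y).tsum_sub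
    (summable_Gcdf_mul_pow_div_factorial (k + 1) x y)]
  congr 1
  rw [F01, ← tsum_mul_left]
  refine tsum_congr fun m => ?_
  rw [show (1 : ℝ) + k + m = 1 + (k + m : ℕ) by push_cast; ring,
    show (1 : ℝ) + (k + 1 : ℕ) + m = 1 + (k + m + 1 : ℕ) by push_cast; ring,
    Gcdf_one_add_natCast_succ, show k + m + 1 = k + 1 + m by omega, gdens_one_add_natCast_add]
  field_simp
  ring

theorem stmt8_general (n : ℕ) (x y : ℝ) :
    ncGcdf (1 + n) x y =
      ncGcdf 1 x y -
        Real.exp (-y) * ∑ k ∈ Finset.Icc 1 n, gdens (1 + k) x * F01 (1 + k) (x * y) := by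
  induction n with
  | zero => simp
  | succ n ih =>
    rw [Finset.sum_Icc_succ_top (Nat.le_add_left 1 n), mul_add]
    linarith [ncGcdf_sub_ncGcdf_succ n x y]

theorem stmt8 (n : ℕ) (hn : 1 ≤ n) (x y : ℝ) (hx : 0 < x) (hy : 0 < y) :
    ncGcdf (1 + n) x y =
      ncGcdf 1 x y -
        Real.exp (-y) * ∑ k ∈ Finset.Icc 1 n, gdens (1 + k) x * F01 (1 + k) (x * y) :=
  stmt8_general n x y
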